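/- Let X_1, ..., X_n be i.i.d. random variables with values in a measurable space S, and let H : S³ → [0, ∞) be measurable and symmetric in its arguments. Suppose E[H(X, X', X')^{2+δ}] ≤ B_{Hδ} < ∞ and E[H(X, X, X)^{2+δ}] ≤ B_{Hδ} for some δ > 0 (X, X' independent copies), and set B_{H1} := max{ E[H(X, X', X'')], E[H(X, X', X')] }. Then there exists a positive constant C depending only on δ and B_{Hδ} such that for every n, every ς > 10·n^{−1/2}·B_{H1}, and every M with 0 < M < n^{1/2}·ς/5: P( | (√n / n³) · Σ_{j,k=1}^{n} ( H_{jkk} − E[H_{jkk}] ) | ≥ ς ) ≤ C·n^{−2}·M^{−δ}·ς^{−2}, where H_{jkk} := H(X_j, X_k, X_k) and E[H_{jkk}] denotes E[H(X, X', X')] when j ≠ k and E[H(X, X, X)] when j = k. -/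

import Mathlib

set_option maxHeartbeats 1000000

open MeasureTheory ProbabilityTheory Filter

lemma aux_int {α : Type*} [MeasurableSpace α] {ν : Measure α} {f : α → ℝ}
    (hm : Measurable f) (h0 : ∀ x, 0 ≤ f x)
    (hfin : (∫⁻ x, ENNReal.ofReal (f x) ∂ν) ≠ ⊤) : Integrable f ν := by
  refine ⟨hm.aestronglyMeasurable, ?_⟩
  rw [hasFiniteIntegral_iff_norm]
  simp_rw [fun x => Real.norm_of_nonneg (h0 x)]
  exact lt_top_iff_ne_top.2 hfin

lemma aux_integral_le {α : Type*} [MeasurableSpace α] {ν : Measure α} {f : α → ℝ} {B : ℝ}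
    (hm : Measurable f) (h0 : ∀ x, 0 ≤ f x) (hB : 0 ≤ B)
    (hle : (∫⁻ x, ENNReal.ofReal (f x) ∂ν) ≤ ENNReal.ofReal B) :
    ∫ x, f x ∂ν ≤ B := by
  rw [integral_eq_lintegral_of_nonneg_ae (Filter.Eventually.of_forall h0)
    hm.aestronglyMeasurable]
  calc (∫⁻ x, ENNReal.ofReal (f x) ∂ν).toReal ≤ (ENNReal.ofReal B).toReal :=
        ENNReal.toReal_mono ENNReal.ofReal_ne_top hle
    _ = B := ENNReal.toReal_ofReal hB

lemma aux_pattern {α : Type*} [MeasurableSpace α] (ν : Measure α) [IsProbabilityMeasure ν]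
    (F : α → ℝ) (hF : Measurable F) (hF0 : ∀ x, 0 ≤ F x) (δ B M : ℝ)
    (hδ : 0 < δ) (hB : 0 ≤ B) (hM : 0 < M)
    (hmom : (∫⁻ x, ENNReal.ofReal (F x ^ ((2:ℝ) + δ)) ∂ν) ≤ ENNReal.ofReal B) :
    Integrable F ν ∧ Integrable (fun x => if M < F x then F x else 0) ν ∧
    Integrable (fun x => (if M < F x then F x else 0) ^ 2) ν ∧
    (∫ x, (if M < F x then F x else 0) ^ 2 ∂ν) ≤ M ^ (-δ) * B ∧
    (∫ x, (if M < F x then F x else 0) ∂ν) ^ 2 ≤ ((1 + B) ^ 2 + B ^ 2) * M ^ (-δ) := by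
  set Z : α → ℝ := fun x => if M < F x then F x else 0 with hZdef
  set p : ℝ := (2:ℝ) + δ with hp
  have hZ0 : ∀ x, 0 ≤ Z x := by
    intro x; simp only [hZdef]; split
    · exact hF0 x
    · exact le_rfl
  have hZF : ∀ x, Z x ≤ F x := by
    intro x; simp only [hZdef]; split
    · exact le_rfl
    · exact hF0 x
  have hZmeas : Measurable Z := by
    apply Measurable.ite (measurableSet_lt measurable_const hF) hF measurable_const
  have hFp_meas : Measurable (fun x => F x ^ p) :=
    (Real.continuous_rpow_const (by rw [hp]; linarith)).measurable.comp hF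
  have hFp0 : ∀ x, 0 ≤ F x ^ p := fun x => Real.rpow_nonneg (hF0 x) p
  -- F ≤ 1 + F^p
  have h1 : ∀ x, F x ≤ 1 + F x ^ p := by
    intro x
    rcases le_or_gt (F x) 1 with h | h
    · linarith [hFp0 x]
    · have : F x ^ (1:ℝ) ≤ F x ^ p := by
        apply Real.rpow_le_rpow_of_exponent_le h.le; simp [hp]; linarith
      rw [Real.rpow_one] at this; linarith
  -- Z^2 ≤ M^(-δ) * F^p
  have h2 : ∀ x, Z x ^ 2 ≤ M ^ (-δ) * F x ^ p := by
    intro x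
    by_cases h : M < F x
    · have hFx : 0 < F x := hM.trans h
      have hMδ : M ^ δ ≤ F x ^ δ := Real.rpow_le_rpow hM.le h.le hδ.le
      have hMδpos : 0 < M ^ δ := Real.rpow_pos_of_pos hM δ
      have e1 : F x ^ p = F x ^ (2:ℝ) * F x ^ δ := Real.rpow_add hFx 2 δ
      have e2 : F x ^ (2:ℝ) = F x ^ (2:ℕ) := Real.rpow_two (F x)
      simp only [hZdef, if_pos h]
      rw [Real.rpow_neg hM.le, e1, e2, inv_mul_eq_div, le_div_iff₀ hMδpos]
      have := mul_le_mul_of_nonneg_left hMδ (sq_nonneg (F x))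
      calc F x ^ 2 * M ^ δ ≤ F x ^ 2 * F x ^ δ := this
        _ = F x ^ (2:ℕ) * F x ^ δ := by norm_num
    · simp only [hZdef, if_neg h]
      have : (0:ℝ) ^ 2 = 0 := by norm_num
      rw [this]
      exact mul_nonneg (Real.rpow_nonneg hM.le _) (hFp0 x)
  -- Z ≤ M^(-1-δ) * F^p
  have h3 : ∀ x, Z x ≤ M ^ (-(1:ℝ) - δ) * F x ^ p := by
    intro x
    by_cases h : M < F x
    · have hFx : 0 < F x := hM.trans h
      have hMδ : M ^ ((1:ℝ) + δ) ≤ F x ^ ((1:ℝ) + δ) :=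
        Real.rpow_le_rpow hM.le h.le (by linarith)
      have hMδpos : 0 < M ^ ((1:ℝ) + δ) := Real.rpow_pos_of_pos hM _
      have e1 : F x ^ p = F x * F x ^ ((1:ℝ) + δ) := by
        have e : p = 1 + (1 + δ) := by rw [hp]; ring
        rw [e, Real.rpow_add hFx, Real.rpow_one]
      have e3 : M ^ (-(1:ℝ) - δ) = (M ^ ((1:ℝ) + δ))⁻¹ := by
        rw [← Real.rpow_neg hM.le]; congr 1; ring
      simp only [hZdef, if_pos h]
      rw [e3, e1, inv_mul_eq_div, le_div_iff₀ hMδpos]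
      exact mul_le_mul_of_nonneg_left hMδ hFx.le
    · simp only [hZdef, if_neg h]
      exact mul_nonneg (Real.rpow_nonneg hM.le _) (hFp0 x)
  -- integrability of F^p  and ∫ F^p ≤ B
  have hfinFp : (∫⁻ x, ENNReal.ofReal (F x ^ p) ∂ν) ≠ ⊤ :=
    ne_top_of_le_ne_top ENNReal.ofReal_ne_top hmom
  have hIntFp : Integrable (fun x => F x ^ p) ν := aux_int hFp_meas hFp0 hfinFp
  have hiFp : ∫ x, F x ^ p ∂ν ≤ B := aux_integral_le hFp_meas hFp0 hB hmom
  have hiFp0 : 0 ≤ ∫ x, F x ^ p ∂ν := integral_nonneg hFp0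
  -- Integrable F
  have hIntBnd : Integrable (fun x => 1 + F x ^ p) ν := (integrable_const (1:ℝ)).add hIntFp
  have hIntF : Integrable F ν := by
    apply Integrable.mono' hIntBnd hF.aestronglyMeasurable
    exact Filter.Eventually.of_forall fun x => by
      rw [Real.norm_of_nonneg (hF0 x)]; exact h1 x
  have hIntZ : Integrable Z ν := by
    apply Integrable.mono' hIntF hZmeas.aestronglyMeasurable
    exact Filter.Eventually.of_forall fun x => by
      rw [Real.norm_of_nonneg (hZ0 x)]; exact hZF x
  have hIntZ2 : Integrable (fun x => Z x ^ 2) ν := by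
    apply Integrable.mono' (hIntFp.const_mul (M ^ (-δ)))
      ((hZmeas.pow_const 2).aestronglyMeasurable)
    exact Filter.Eventually.of_forall fun x => by
      rw [Real.norm_of_nonneg (sq_nonneg (Z x))]; exact h2 x
  have hZ2le : (∫ x, Z x ^ 2 ∂ν) ≤ M ^ (-δ) * B := by
    calc (∫ x, Z x ^ 2 ∂ν) ≤ ∫ x, M ^ (-δ) * F x ^ p ∂ν :=
          integral_mono hIntZ2 (hIntFp.const_mul _) h2
      _ = M ^ (-δ) * ∫ x, F x ^ p ∂ν := integral_const_mul _ _
      _ ≤ M ^ (-δ) * B := by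
          apply mul_le_mul_of_nonneg_left hiFp (Real.rpow_nonneg hM.le _)
  -- bounds on ∫ Z
  have hcZ0 : 0 ≤ ∫ x, Z x ∂ν := integral_nonneg hZ0
  have hcZ1 : (∫ x, Z x ∂ν) ≤ 1 + B := by
    calc (∫ x, Z x ∂ν) ≤ ∫ x, 1 + F x ^ p ∂ν := by
          apply integral_mono hIntZ hIntBnd
          intro x; exact (hZF x).trans (h1 x)
      _ = 1 + ∫ x, F x ^ p ∂ν := by
          rw [integral_add (integrable_const 1) hIntFp]; simp
      _ ≤ 1 + B := by linarith
  have hcZ2 : (∫ x, Z x ∂ν) ≤ M ^ (-(1:ℝ) - δ) * B := by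
    calc (∫ x, Z x ∂ν) ≤ ∫ x, M ^ (-(1:ℝ) - δ) * F x ^ p ∂ν :=
          integral_mono hIntZ (hIntFp.const_mul _) h3
      _ = M ^ (-(1:ℝ) - δ) * ∫ x, F x ^ p ∂ν := integral_const_mul _ _
      _ ≤ M ^ (-(1:ℝ) - δ) * B := by
          apply mul_le_mul_of_nonneg_left hiFp (Real.rpow_nonneg hM.le _)
  refine ⟨hIntF, hIntZ, hIntZ2, hZ2le, ?_⟩
  rcases le_or_gt 1 M with hM1 | hM1
  · have h4 : (∫ x, Z x ∂ν) ^ 2 ≤ (M ^ (-(1:ℝ) - δ) * B) ^ 2 :=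
      pow_le_pow_left₀ hcZ0 hcZ2 2
    have h5 : (M ^ (-(1:ℝ) - δ)) ^ 2 = M ^ ((-(1:ℝ) - δ) * 2) := by
      rw [← Real.rpow_natCast (M ^ (-(1:ℝ) - δ)) 2, ← Real.rpow_mul hM.le]
      norm_num
    have h6 : M ^ ((-(1:ℝ) - δ) * 2) ≤ M ^ (-δ) :=
      Real.rpow_le_rpow_of_exponent_le hM1 (by nlinarith)
    have h7 : (M ^ (-(1:ℝ) - δ) * B) ^ 2 ≤ B ^ 2 * M ^ (-δ) := by
      rw [mul_pow, h5]
      calc M ^ ((-(1:ℝ) - δ) * 2) * B ^ 2 ≤ M ^ (-δ) * B ^ 2 :=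
            mul_le_mul_of_nonneg_right h6 (sq_nonneg B)
        _ = B ^ 2 * M ^ (-δ) := mul_comm _ _
    have h8 : (0:ℝ) ≤ (1 + B) ^ 2 * M ^ (-δ) := by positivity
    calc (∫ x, Z x ∂ν) ^ 2 ≤ B ^ 2 * M ^ (-δ) := h4.trans h7
      _ ≤ ((1 + B) ^ 2 + B ^ 2) * M ^ (-δ) := by nlinarith
  · have hMδ1 : (1:ℝ) ≤ M ^ (-δ) := by
      have h9 : M ^ δ ≤ 1 := Real.rpow_le_one hM.le hM1.le hδ.le
      have h10 : 0 < M ^ δ := Real.rpow_pos_of_pos hM δ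
      rw [Real.rpow_neg hM.le]
      exact (one_le_inv₀ h10).2 h9
    have h4 : (∫ x, Z x ∂ν) ^ 2 ≤ (1 + B) ^ 2 := pow_le_pow_left₀ hcZ0 hcZ1 2
    have h5 : (1 + B) ^ 2 ≤ ((1 + B) ^ 2 + B ^ 2) * M ^ (-δ) := by nlinarith [sq_nonneg B, sq_nonneg (1+B)]
    exact h4.trans h5


lemma aux_card (n : ℕ) :
    ((Finset.univ : Finset ((Fin n × Fin n) × (Fin n × Fin n))).filter
      (fun x => x.1.1 = x.2.1 ∨ x.1.1 = x.2.2 ∨ x.1.2 = x.2.1 ∨ x.1.2 = x.2.2)).card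
      ≤ 4 * n ^ 3 := by
  classical
  have hcard : Fintype.card (Fin n × Fin n × Fin n) = n ^ 3 := by
    simp [Fintype.card_prod]; ring
  have key : ∀ (p : ((Fin n × Fin n) × (Fin n × Fin n)) → Prop) [DecidablePred p]
      (f : ((Fin n × Fin n) × (Fin n × Fin n)) → (Fin n × Fin n × Fin n)),
      (∀ x y, p x → p y → f x = f y → x = y) →
      (Finset.univ.filter p).card ≤ n ^ 3 := by
    intro p _ f hinj
    calc (Finset.univ.filter p).card
        ≤ (Finset.univ : Finset (Fin n × Fin n × Fin n)).card := by
          apply Finset.card_le_card_of_injOn f (fun x _ => Finset.mem_univ _)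
          intro x hx y hy hxy
          simp only [Finset.mem_coe, Finset.mem_filter] at hx hy
          exact hinj x y hx.2 hy.2 hxy
      _ = n ^ 3 := by rw [Finset.card_univ, hcard]
  have h1 := key (fun x => x.1.1 = x.2.1) (fun x => (x.1.2, x.2))
    (by rintro ⟨⟨a,b⟩,⟨c,d⟩⟩ ⟨⟨a',b'⟩,⟨c',d'⟩⟩ h h' e; simp_all)
  have h2 := key (fun x => x.1.1 = x.2.2) (fun x => (x.1.2, x.2))
    (by rintro ⟨⟨a,b⟩,⟨c,d⟩⟩ ⟨⟨a',b'⟩,⟨c',d'⟩⟩ h h' e; simp_all)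
  have h3 := key (fun x => x.1.2 = x.2.1) (fun x => (x.1.1, x.2))
    (by rintro ⟨⟨a,b⟩,⟨c,d⟩⟩ ⟨⟨a',b'⟩,⟨c',d'⟩⟩ h h' e; simp_all)
  have h4 := key (fun x => x.1.2 = x.2.2) (fun x => (x.1.1, x.2))
    (by rintro ⟨⟨a,b⟩,⟨c,d⟩⟩ ⟨⟨a',b'⟩,⟨c',d'⟩⟩ h h' e; simp_all)
  have hsub : (Finset.univ.filter
      (fun x : (Fin n × Fin n) × (Fin n × Fin n) =>
        x.1.1 = x.2.1 ∨ x.1.1 = x.2.2 ∨ x.1.2 = x.2.1 ∨ x.1.2 = x.2.2))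
      ⊆ ((Finset.univ.filter (fun x : (Fin n × Fin n) × (Fin n × Fin n) => x.1.1 = x.2.1)) ∪
         (Finset.univ.filter (fun x => x.1.1 = x.2.2)) ∪
         (Finset.univ.filter (fun x => x.1.2 = x.2.1)) ∪
         (Finset.univ.filter (fun x => x.1.2 = x.2.2))) := by
    intro x hx
    simp only [Finset.mem_filter, Finset.mem_union, Finset.mem_univ, true_and] at hx ⊢
    tauto
  calc _ ≤ _ := Finset.card_le_card hsub
    _ ≤ 4 * n ^ 3 := by
        calc _ ≤ _ := Finset.card_union_le _ _
          _ ≤ ((Finset.univ.filter (fun x : (Fin n × Fin n) × (Fin n × Fin n) => x.1.1 = x.2.1)) ∪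
         (Finset.univ.filter (fun x => x.1.1 = x.2.2)) ∪
         (Finset.univ.filter (fun x => x.1.2 = x.2.1))).card + n ^ 3 := by gcongr
          _ ≤ (((Finset.univ.filter (fun x : (Fin n × Fin n) × (Fin n × Fin n) => x.1.1 = x.2.1)) ∪
         (Finset.univ.filter (fun x => x.1.1 = x.2.2))).card +
           (Finset.univ.filter (fun x : (Fin n × Fin n) × (Fin n × Fin n) => x.1.2 = x.2.1)).card) + n ^ 3 := by
            gcongr; exact Finset.card_union_le _ _
          _ ≤ ((n ^ 3 + n ^ 3) + n ^ 3) + n ^ 3 := by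
            gcongr
            calc _ ≤ _ := Finset.card_union_le _ _
              _ ≤ n ^ 3 + n ^ 3 := by gcongr
          _ = 4 * n ^ 3 := by ring

lemma aux_amgm (a b : ℝ) : a * b ≤ (a ^ 2 + b ^ 2) / 2 := by nlinarith [sq_nonneg (a - b)]

lemma aux_absamgm (a b : ℝ) : |a| * |b| ≤ (a ^ 2 + b ^ 2) / 2 := by
  nlinarith [sq_nonneg (|a| - |b|), sq_abs a, sq_abs b]

lemma aux_avg {A B c : ℝ} (h1 : A ≤ c) (h2 : B ≤ c) : (A + B) / 2 ≤ c := by linarith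

lemma aux_sqsub (a c : ℝ) : (a - c) ^ 2 ≤ 2 * a ^ 2 + 2 * c ^ 2 := by
  nlinarith [sq_nonneg (a + c)]

open MeasureTheory ProbabilityTheory Filter

/-- Deviation bound for the diagonal part `Σ_{j,k} H(X_j, X_k, X_k)`
of a third-order U-statistic. -/
theorem stmt_2 (δ BHδ : ℝ) (hδ : 0 < δ) (hBHδ : 0 ≤ BHδ) :
    ∃ C : ℝ, 0 < C ∧
      ∀ (Ω : Type) [MeasurableSpace Ω] (P : Measure Ω), IsProbabilityMeasure P →
      ∀ (S : Type) [MeasurableSpace S] (μ : Measure S) (n : ℕ)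
        (X : Fin n → Ω → S), (∀ i, Measurable (X i)) →
      (∀ i, Measure.map (X i) P = μ) →
      iIndepFun X P →
      ∀ (H : S → S → S → ℝ),
      Measurable (fun t : S × S × S => H t.1 t.2.1 t.2.2) →
      (∀ x y z, 0 ≤ H x y z) →
      (∀ x y z, H x y z = H y x z) →
      (∀ x y z, H x y z = H x z y) →
      (∫⁻ t : S × S, ENNReal.ofReal ((H t.1 t.2 t.2) ^ ((2 : ℝ) + δ))
          ∂(μ.prod μ)) ≤ ENNReal.ofReal BHδ →
      (∫⁻ x, ENNReal.ofReal ((H x x x) ^ ((2 : ℝ) + δ)) ∂μ) ≤ ENNReal.ofReal BHδ →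
      ∀ BH1 : ℝ,
      BH1 = max (∫ x, (∫ y, (∫ z, H x y z ∂μ) ∂μ) ∂μ) (∫ x, (∫ y, H x y y ∂μ) ∂μ) →
      ∀ ς M : ℝ, 10 * (Real.sqrt n)⁻¹ * BH1 < ς → 0 < M → M < Real.sqrt n * ς / 5 →
      (P {ω | ς ≤
          |(Real.sqrt n / (n : ℝ) ^ 3) *
            ∑ j : Fin n, ∑ k : Fin n,
              (H (X j ω) (X k ω) (X k ω)
                - if j = k then ∫ x, H x x x ∂μ
                  else ∫ x, (∫ y, H x y y ∂μ) ∂μ)| }).toReal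
        ≤ C * (n : ℝ) ^ (-2 : ℝ) * M ^ (-δ) * ς ^ (-2 : ℝ) := by
  classical
  set K : ℝ := 2 * BHδ + 2 * ((1 + BHδ) ^ 2 + BHδ ^ 2) with hK
  have hK0 : 0 ≤ K := by positivity
  refine ⟨7 * K + 1, by positivity, ?_⟩
  intro Ω mΩ P hP S mS μ n X hXm hmap hind H hH hHpos hs1 hs2 hmom2 hmom1 BH1 hBH1
    ς M hςB hM0 hM5
  rcases Nat.eq_zero_or_pos n with hn0 | hn
  · subst hn0
    rw [Nat.cast_zero, Real.sqrt_zero, zero_mul, zero_div] at hM5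
    linarith
  have hn0R : (0 : ℝ) < n := by exact_mod_cast hn
  have hsn : 0 < Real.sqrt n := Real.sqrt_pos.2 hn0R
  have hμ : IsProbabilityMeasure μ := by
    rw [← hmap ⟨0, hn⟩]
    exact Measure.isProbabilityMeasure_map (hXm ⟨0, hn⟩).aemeasurable
  have hBH1nn : 0 ≤ BH1 := by
    rw [hBH1]
    exact le_max_of_le_right (integral_nonneg fun x => integral_nonneg fun y => hHpos _ _ _)
  have hς0 : 0 < ς :=
    lt_of_le_of_lt (by positivity : (0:ℝ) ≤ 10 * (Real.sqrt n)⁻¹ * BH1) hςB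
  -- pattern function on S × S
  set F2 : S × S → ℝ := fun t => H t.1 t.2 t.2 with hF2
  have hF2m : Measurable F2 :=
    hH.comp (measurable_fst.prodMk (measurable_snd.prodMk measurable_snd))
  have hF2nn : ∀ t, 0 ≤ F2 t := fun t => hHpos _ _ _
  set Zf : S × S → ℝ := fun t => if M < F2 t then F2 t else 0 with hZf
  have hZfm : Measurable Zf :=
    Measurable.ite (measurableSet_lt measurable_const hF2m) hF2m measurable_const
  have hZfnn : ∀ t, 0 ≤ Zf t := by
    intro t; rw [hZf]; dsimp only; split
    · exact hF2nn t
    · exact le_rfl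
  -- pair maps and laws
  set pr : Fin n × Fin n → Ω → S × S := fun q ω => (X q.1 ω, X q.2 ω) with hpr
  have hprm : ∀ q, Measurable (pr q) := fun q => (hXm q.1).prodMk (hXm q.2)
  set νq : Fin n × Fin n → Measure (S × S) := fun q => Measure.map (pr q) P with hνq
  have hνprob : ∀ q, IsProbabilityMeasure (νq q) := fun q =>
    Measure.isProbabilityMeasure_map (hprm q).aemeasurable
  have hdiagm : Measurable (fun x : S => (x, x)) := measurable_id.prodMk measurable_id
  have hlaw : ∀ q : Fin n × Fin n, q.1 ≠ q.2 → νq q = μ.prod μ := by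
    intro q hne
    have h := (indepFun_iff_map_prod_eq_prod_map_map (hXm q.1).aemeasurable
      (hXm q.2).aemeasurable).mp (hind.indepFun hne)
    rw [hνq]; dsimp only
    rw [hpr]; dsimp only
    rw [h, hmap q.1, hmap q.2]
  have hlawd : ∀ q : Fin n × Fin n, q.1 = q.2 → νq q = Measure.map (fun x => (x, x)) μ := by
    intro q he
    have hco : pr q = (fun x : S => (x, x)) ∘ X q.1 := by
      funext ω; rw [hpr]; dsimp only; rw [← he]; rfl
    rw [hνq]; dsimp only
    rw [hco, ← Measure.map_map hdiagm (hXm q.1), hmap q.1]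
  -- moment bounds for each pattern
  have hrm : Measurable (fun t => ENNReal.ofReal (F2 t ^ ((2:ℝ) + δ))) :=
    ENNReal.measurable_ofReal.comp
      ((Real.continuous_rpow_const (by linarith)).measurable.comp hF2m)
  have hmomq : ∀ q : Fin n × Fin n,
      (∫⁻ t, ENNReal.ofReal (F2 t ^ ((2:ℝ) + δ)) ∂(νq q)) ≤ ENNReal.ofReal BHδ := by
    intro q
    by_cases he : q.1 = q.2
    · rw [hlawd q he, lintegral_map hrm hdiagm]
      exact hmom1
    · rw [hlaw q he]
      exact hmom2
  -- pattern facts at each νq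
  have hpat := fun q : Fin n × Fin n =>
    aux_pattern (νq q) F2 hF2m hF2nn δ BHδ M hδ hBHδ hM0 (hmomq q)
  -- random variables
  set Y : Fin n × Fin n → Ω → ℝ := fun q ω => F2 (pr q ω) with hYd
  set Zq : Fin n × Fin n → Ω → ℝ := fun q ω => Zf (pr q ω) with hZqd
  have hYm : ∀ q, Measurable (Y q) := fun q => hF2m.comp (hprm q)
  have hZqm : ∀ q, Measurable (Zq q) := fun q => hZfm.comp (hprm q)
  have hIntY : ∀ q, Integrable (Y q) P := fun q =>
    (integrable_map_measure hF2m.aestronglyMeasurable (hprm q).aemeasurable).mp (hpat q).1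
  have hIntZ : ∀ q, Integrable (Zq q) P := fun q =>
    (integrable_map_measure hZfm.aestronglyMeasurable (hprm q).aemeasurable).mp (hpat q).2.1
  have hIntZ2 : ∀ q, Integrable (fun ω => Zq q ω ^ 2) P := fun q =>
    (integrable_map_measure ((hZfm.pow_const 2).aestronglyMeasurable)
      (hprm q).aemeasurable).mp (hpat q).2.2.1
  set cZ : Fin n × Fin n → ℝ := fun q => ∫ ω, Zq q ω ∂P with hcZ
  have hcZeq : ∀ q, cZ q = ∫ t, Zf t ∂(νq q) := by
    intro q
    rw [hcZ]; dsimp only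
    rw [hνq]; dsimp only
    exact (integral_map (hprm q).aemeasurable hZfm.aestronglyMeasurable).symm
  have hiZ2 : ∀ q, (∫ ω, Zq q ω ^ 2 ∂P) ≤ M ^ (-δ) * BHδ := by
    intro q
    have e : (∫ ω, Zq q ω ^ 2 ∂P) = ∫ t, Zf t ^ 2 ∂(νq q) := by
      rw [hνq]; dsimp only
      exact (integral_map (hprm q).aemeasurable
        ((hZfm.pow_const 2).aestronglyMeasurable)).symm
    rw [e]; exact (hpat q).2.2.2.1
  have hcZ2 : ∀ q, (cZ q) ^ 2 ≤ ((1 + BHδ) ^ 2 + BHδ ^ 2) * M ^ (-δ) := by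
    intro q; rw [hcZeq q]; exact (hpat q).2.2.2.2
  -- mean identity
  set m : Fin n × Fin n → ℝ := fun q =>
    if q.1 = q.2 then ∫ x, H x x x ∂μ else ∫ x, (∫ y, H x y y ∂μ) ∂μ with hm
  have hmY : ∀ q, m q = ∫ ω, Y q ω ∂P := by
    intro q
    have e : (∫ ω, Y q ω ∂P) = ∫ t, F2 t ∂(νq q) := by
      rw [hνq]; dsimp only
      exact (integral_map (hprm q).aemeasurable hF2m.aestronglyMeasurable).symm
    rw [hm]; dsimp only
    by_cases he : q.1 = q.2
    · rw [if_pos he, e, hlawd q he, integral_map hdiagm.aemeasurable]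
      exact hF2m.aestronglyMeasurable
    · have hint : Integrable F2 (μ.prod μ) := by rw [← hlaw q he]; exact (hpat q).1
      rw [if_neg he, e, hlaw q he, MeasureTheory.integral_prod F2 hint]
  -- truncated part
  set Wq : Fin n × Fin n → Ω → ℝ := fun q ω => Y q ω - Zq q ω with hWq
  have hWbound : ∀ q ω, 0 ≤ Wq q ω ∧ Wq q ω ≤ M := by
    intro q ω
    rw [hWq]; dsimp only
    rw [hYd, hZqd]; dsimp only
    rw [hZf]; dsimp only
    by_cases h : M < F2 (pr q ω)
    · rw [if_pos h]
      constructor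
      · simp
      · simp [hM0.le]
    · rw [if_neg h]
      push_neg at h
      constructor
      · simpa using hF2nn (pr q ω)
      · simpa using h
  have hIntW : ∀ q, Integrable (Wq q) P := fun q => (hIntY q).sub (hIntZ q)
  set cW : Fin n × Fin n → ℝ := fun q => ∫ ω, Wq q ω ∂P with hcW
  have hcWb : ∀ q, 0 ≤ cW q ∧ cW q ≤ M := by
    intro q
    constructor
    · exact integral_nonneg fun ω => (hWbound q ω).1
    · calc (∫ ω, Wq q ω ∂P) ≤ ∫ _, M ∂P :=
            integral_mono (hIntW q) (integrable_const M) fun ω => (hWbound q ω).2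
        _ = M := by simp [measure_univ]
  have hcWZ : ∀ q, m q = cW q + cZ q := by
    intro q
    rw [hmY q, hcW, hcZ]; dsimp only
    rw [← integral_add (hIntW q) (hIntZ q)]
    refine integral_congr_ae (Filter.Eventually.of_forall fun ω => ?_)
    rw [hWq]; dsimp only; ring
  -- centered tail variables
  set ζ : Fin n × Fin n → Ω → ℝ := fun q ω => Zq q ω - cZ q with hζd
  have hζm : ∀ q, Measurable (ζ q) := fun q => (hZqm q).sub measurable_const
  have hζint : ∀ q, Integrable (ζ q) P := fun q => (hIntZ q).sub (integrable_const _)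
  have hζ2int : ∀ q, Integrable (fun ω => ζ q ω ^ 2) P := by
    intro q
    apply Integrable.mono' (((hIntZ2 q).const_mul 2).add (integrable_const (2 * cZ q ^ 2)))
      (((hζm q).pow_const 2).aestronglyMeasurable)
    refine Filter.Eventually.of_forall fun ω => ?_
    simp only [Pi.add_apply]
    rw [Real.norm_of_nonneg (sq_nonneg _), hζd]; dsimp only
    exact aux_sqsub _ _
  have hζ2 : ∀ q, (∫ ω, ζ q ω ^ 2 ∂P) ≤ K * M ^ (-δ) := by
    intro q
    have hb : ∀ ω, ζ q ω ^ 2 ≤ 2 * Zq q ω ^ 2 + 2 * cZ q ^ 2 := by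
      intro ω; rw [hζd]; dsimp only; nlinarith [sq_nonneg (Zq q ω + cZ q)]
    have hIb : Integrable (fun ω => 2 * Zq q ω ^ 2 + 2 * cZ q ^ 2) P :=
      ((hIntZ2 q).const_mul 2).add (integrable_const _)
    calc (∫ ω, ζ q ω ^ 2 ∂P) ≤ ∫ ω, (2 * Zq q ω ^ 2 + 2 * cZ q ^ 2) ∂P :=
          integral_mono (hζ2int q) hIb hb
      _ = 2 * (∫ ω, Zq q ω ^ 2 ∂P) + 2 * cZ q ^ 2 := by
          rw [integral_add ((hIntZ2 q).const_mul 2) (integrable_const _),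
            integral_const_mul, integral_const]
          simp [measure_univ]
      _ ≤ 2 * (M ^ (-δ) * BHδ) + 2 * (((1 + BHδ) ^ 2 + BHδ ^ 2) * M ^ (-δ)) := by
          have h1 := hiZ2 q
          have h2 := hcZ2 q
          linarith
      _ = K * M ^ (-δ) := by rw [hK]; ring
  have hζ0 : ∀ q, (∫ ω, ζ q ω ∂P) = 0 := by
    intro q
    rw [hζd]; dsimp only
    rw [integral_sub (hIntZ q) (integrable_const _), integral_const]
    simp [measure_univ, hcZ]
  have hprodint : ∀ q q', Integrable (fun ω => ζ q ω * ζ q' ω) P := by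
    intro q q'
    apply Integrable.mono' (((hζ2int q).add (hζ2int q')).div_const 2)
      (((hζm q).mul (hζm q')).aestronglyMeasurable)
    refine Filter.Eventually.of_forall fun ω => ?_
    simp only [Pi.add_apply, Pi.div_apply, Pi.mul_apply]
    rw [Real.norm_eq_abs, abs_mul]
    exact aux_absamgm _ _
  have hprodle : ∀ q q', (∫ ω, ζ q ω * ζ q' ω ∂P) ≤ K * M ^ (-δ) := by
    intro q q'
    calc (∫ ω, ζ q ω * ζ q' ω ∂P) ≤ ∫ ω, (ζ q ω ^ 2 + ζ q' ω ^ 2) / 2 ∂P :=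
          integral_mono (hprodint q q') (((hζ2int q).add (hζ2int q')).div_const 2)
            (fun ω => by beta_reduce; exact aux_amgm _ _)
      _ = ((∫ ω, ζ q ω ^ 2 ∂P) + ∫ ω, ζ q' ω ^ 2 ∂P) / 2 := by
          rw [integral_div, integral_add (hζ2int q) (hζ2int q')]
      _ ≤ K * M ^ (-δ) := aux_avg (hζ2 q) (hζ2 q')
  have hzero : ∀ q q' : Fin n × Fin n,
      ¬(q.1 = q'.1 ∨ q.1 = q'.2 ∨ q.2 = q'.1 ∨ q.2 = q'.2) →
      (∫ ω, ζ q ω * ζ q' ω ∂P) = 0 := by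
    intro q q' hdisj
    push_neg at hdisj
    obtain ⟨h1, h2, h3, h4⟩ := hdisj
    have hpairind : IndepFun (fun ω => (X q.1 ω, X q.2 ω)) (fun ω => (X q'.1 ω, X q'.2 ω)) P :=
      hind.indepFun_prodMk_prodMk hXm q.1 q.2 q'.1 q'.2 h1 h2 h3 h4
    have hφ : Measurable (fun t : S × S => Zf t - cZ q) := hZfm.sub measurable_const
    have hφ' : Measurable (fun t : S × S => Zf t - cZ q') := hZfm.sub measurable_const
    have hζind : IndepFun (ζ q) (ζ q') P := hpairind.comp hφ hφ'
    have hmul := hζind.integral_mul_eq_mul_integral ((hζm q).aestronglyMeasurable)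
      ((hζm q').aestronglyMeasurable)
    calc (∫ ω, ζ q ω * ζ q' ω ∂P) = (∫ ω, ζ q ω ∂P) * (∫ ω, ζ q' ω ∂P) := by
          simpa [Pi.mul_apply] using hmul
      _ = 0 := by rw [hζ0 q, zero_mul]
  -- the tail sum
  set S2 : Ω → ℝ := fun ω => ∑ q : Fin n × Fin n, ζ q ω with hS2d
  have hS2m : Measurable S2 := by
    rw [hS2d]; exact Finset.measurable_sum _ fun q _ => hζm q
  have hexp : (fun ω => S2 ω ^ 2) =
      fun ω => ∑ q : Fin n × Fin n, ∑ q' : Fin n × Fin n, ζ q ω * ζ q' ω := by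
    funext ω; rw [hS2d]; dsimp only; rw [sq, Finset.sum_mul_sum]
  have hS2sqint : Integrable (fun ω => S2 ω ^ 2) P := by
    rw [hexp]
    exact integrable_finset_sum _ fun q _ =>
      integrable_finset_sum _ fun q' _ => hprodint q q'
  have hiS2 : (∫ ω, S2 ω ^ 2 ∂P) ≤ (4 * (n:ℝ) ^ 3) * (K * M ^ (-δ)) := by
    have e1 : (∫ ω, S2 ω ^ 2 ∂P)
        = ∑ q : Fin n × Fin n, ∑ q' : Fin n × Fin n, ∫ ω, ζ q ω * ζ q' ω ∂P := by
      rw [hexp, integral_finset_sum _ fun q _ =>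
        integrable_finset_sum _ fun q' _ => hprodint q q']
      exact Finset.sum_congr rfl fun q _ =>
        integral_finset_sum _ fun q' _ => hprodint q q'
    have hKM0 : 0 ≤ K * M ^ (-δ) := mul_nonneg hK0 (Real.rpow_nonneg hM0.le _)
    have e2 : ∑ q : Fin n × Fin n, ∑ q' : Fin n × Fin n, (∫ ω, ζ q ω * ζ q' ω ∂P)
        ≤ ∑ q : Fin n × Fin n, ∑ q' : Fin n × Fin n,
            (if q.1 = q'.1 ∨ q.1 = q'.2 ∨ q.2 = q'.1 ∨ q.2 = q'.2
              then K * M ^ (-δ) else 0) := by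
      refine Finset.sum_le_sum fun q _ => Finset.sum_le_sum fun q' _ => ?_
      by_cases hd : q.1 = q'.1 ∨ q.1 = q'.2 ∨ q.2 = q'.1 ∨ q.2 = q'.2
      · rw [if_pos hd]; exact hprodle q q'
      · rw [if_neg hd, hzero q q' hd]
    have e2' : ∑ q : Fin n × Fin n, ∑ q' : Fin n × Fin n,
            (if q.1 = q'.1 ∨ q.1 = q'.2 ∨ q.2 = q'.1 ∨ q.2 = q'.2
              then K * M ^ (-δ) else 0)
        = ∑ x : (Fin n × Fin n) × (Fin n × Fin n),
            (if x.1.1 = x.2.1 ∨ x.1.1 = x.2.2 ∨ x.1.2 = x.2.1 ∨ x.1.2 = x.2.2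
              then K * M ^ (-δ) else 0) := by
      conv_rhs => rw [← Finset.univ_product_univ, Finset.sum_product]
    have e3 : ∑ x : (Fin n × Fin n) × (Fin n × Fin n),
            (if x.1.1 = x.2.1 ∨ x.1.1 = x.2.2 ∨ x.1.2 = x.2.1 ∨ x.1.2 = x.2.2
              then K * M ^ (-δ) else 0)
        ≤ (4 * (n:ℝ) ^ 3) * (K * M ^ (-δ)) := by
      rw [← Finset.sum_filter, Finset.sum_const, nsmul_eq_mul]
      have hc := aux_card n
      calc (((Finset.univ : Finset ((Fin n × Fin n) × (Fin n × Fin n))).filter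
              (fun x => x.1.1 = x.2.1 ∨ x.1.1 = x.2.2 ∨ x.1.2 = x.2.1 ∨ x.1.2 = x.2.2)).card : ℝ)
            * (K * M ^ (-δ))
          ≤ ((4 * n ^ 3 : ℕ) : ℝ) * (K * M ^ (-δ)) := by
            apply mul_le_mul_of_nonneg_right _ hKM0
            exact_mod_cast hc
        _ = (4 * (n:ℝ) ^ 3) * (K * M ^ (-δ)) := by push_cast; ring
    rw [e1]
    exact e2.trans (le_of_eq_of_le e2' e3)
  -- identify the goal sum
  set Stot : Ω → ℝ := fun ω => ∑ q : Fin n × Fin n, (Y q ω - m q) with hStot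
  have hgoalsum : ∀ ω, (∑ j : Fin n, ∑ k : Fin n,
      (H (X j ω) (X k ω) (X k ω)
        - if j = k then ∫ x, H x x x ∂μ else ∫ x, (∫ y, H x y y ∂μ) ∂μ)) = Stot ω := by
    intro ω
    rw [hStot]; dsimp only
    rw [Fintype.sum_prod_type]
  have hS1 : ∀ ω, |∑ q : Fin n × Fin n, (Wq q ω - cW q)| ≤ (n:ℝ) ^ 2 * M := by
    intro ω
    calc |∑ q : Fin n × Fin n, (Wq q ω - cW q)|
        ≤ ∑ q : Fin n × Fin n, |Wq q ω - cW q| := Finset.abs_sum_le_sum_abs _ _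
      _ ≤ ∑ _q : Fin n × Fin n, M := Finset.sum_le_sum fun q _ => by
          have h1 := hWbound q ω
          have h2 := hcWb q
          rw [abs_le]
          constructor <;> linarith [h1.1, h1.2, h2.1, h2.2]
      _ = (n:ℝ) ^ 2 * M := by
          rw [Finset.sum_const, Finset.card_univ, nsmul_eq_mul, Fintype.card_prod,
            Fintype.card_fin]
          push_cast
          ring
  have hdecomp : ∀ ω, Stot ω = (∑ q : Fin n × Fin n, (Wq q ω - cW q)) + S2 ω := by
    intro ω
    rw [hStot, hS2d]; dsimp only
    rw [← Finset.sum_add_distrib]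
    refine Finset.sum_congr rfl fun q _ => ?_
    rw [hζd, hWq]; dsimp only
    rw [hcWZ q]; ring
  set u : ℝ := 4 / 5 * (Real.sqrt n * (n:ℝ) ^ 2 * ς) with hu
  have hu0 : 0 < u := by
    rw [hu]
    have : 0 < Real.sqrt n * (n:ℝ) ^ 2 * ς := by
      apply mul_pos (mul_pos hsn (by positivity)) hς0
    linarith
  have hincl : {ω | ς ≤
          |(Real.sqrt n / (n : ℝ) ^ 3) *
            ∑ j : Fin n, ∑ k : Fin n,
              (H (X j ω) (X k ω) (X k ω)
                - if j = k then ∫ x, H x x x ∂μ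
                  else ∫ x, (∫ y, H x y y ∂μ) ∂μ)|}
      ⊆ {ω | ENNReal.ofReal (u ^ 2) ≤ ENNReal.ofReal (S2 ω ^ 2)} := by
    intro ω hω
    simp only [Set.mem_setOf_eq] at hω ⊢
    rw [hgoalsum ω] at hω
    have ha : 0 < Real.sqrt n / (n:ℝ) ^ 3 := by positivity
    rw [abs_mul, abs_of_pos ha] at hω
    have h1 : ς / (Real.sqrt n / (n:ℝ) ^ 3) ≤ |Stot ω| := by
      rw [div_le_iff₀ ha]
      rw [mul_comm] at hω
      exact hω
    have hkey : ς / (Real.sqrt n / (n:ℝ) ^ 3) = ς * ((n:ℝ) ^ 2 * Real.sqrt n) := by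
      rw [div_div_eq_mul_div, mul_div_assoc]
      congr 1
      rw [div_eq_iff hsn.ne']
      have hss : Real.sqrt n * Real.sqrt n = (n:ℝ) := Real.mul_self_sqrt hn0R.le
      nlinarith [hss]
    have h2 : u ≤ |S2 ω| := by
      have h3 := hS1 ω
      have h4 : |S2 ω| ≥ |Stot ω| - |∑ q : Fin n × Fin n, (Wq q ω - cW q)| := by
        have := hdecomp ω
        have habs : |Stot ω| ≤ |∑ q : Fin n × Fin n, (Wq q ω - cW q)| + |S2 ω| := by
          rw [this]; exact abs_add_le _ _
        linarith
      rw [hkey] at h1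
      have hM5' : (n:ℝ) ^ 2 * M < (n:ℝ) ^ 2 * (Real.sqrt n * ς / 5) := by
        apply mul_lt_mul_of_pos_left hM5 (by positivity)
      rw [hu]
      nlinarith [h1, h3, h4]
    have h5 : u ^ 2 ≤ S2 ω ^ 2 := by
      nlinarith [abs_nonneg (S2 ω), sq_abs (S2 ω), hu0]
    exact ENNReal.ofReal_le_ofReal h5
  -- Markov / Chebyshev step
  have hεne : ENNReal.ofReal (u ^ 2) ≠ 0 := by
    simp only [ne_eq, ENNReal.ofReal_eq_zero, not_le]
    positivity
  have hfin : P {ω | ς ≤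
          |(Real.sqrt n / (n : ℝ) ^ 3) *
            ∑ j : Fin n, ∑ k : Fin n,
              (H (X j ω) (X k ω) (X k ω)
                - if j = k then ∫ x, H x x x ∂μ
                  else ∫ x, (∫ y, H x y y ∂μ) ∂μ)|}
      ≤ ENNReal.ofReal ((4 * (n:ℝ) ^ 3) * (K * M ^ (-δ))) / ENNReal.ofReal (u ^ 2) := by
    refine le_trans (measure_mono hincl) ?_
    refine le_trans (meas_ge_le_lintegral_div
      (((hS2m.pow_const 2).ennreal_ofReal).aemeasurable)
      hεne ENNReal.ofReal_ne_top) ?_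
    have heq : (∫⁻ ω, ENNReal.ofReal (S2 ω ^ 2) ∂P) = ENNReal.ofReal (∫ ω, S2 ω ^ 2 ∂P) :=
      (ofReal_integral_eq_lintegral_ofReal hS2sqint
        (Filter.Eventually.of_forall fun ω => sq_nonneg _)).symm
    rw [heq]
    exact ENNReal.div_le_div_right (ENNReal.ofReal_le_ofReal hiS2) _
  have htop : ENNReal.ofReal ((4 * (n:ℝ) ^ 3) * (K * M ^ (-δ))) / ENNReal.ofReal (u ^ 2) ≠ ⊤ := by
    exact (ENNReal.div_lt_top ENNReal.ofReal_ne_top hεne).ne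
  refine le_trans (ENNReal.toReal_mono htop hfin) ?_
  have hMδ0 : (0:ℝ) ≤ M ^ (-δ) := Real.rpow_nonneg hM0.le _
  have htor : (ENNReal.ofReal ((4 * (n:ℝ) ^ 3) * (K * M ^ (-δ))) / ENNReal.ofReal (u ^ 2)).toReal
      = ((4 * (n:ℝ) ^ 3) * (K * M ^ (-δ))) / u ^ 2 := by
    rw [ENNReal.toReal_div, ENNReal.toReal_ofReal (by positivity),
      ENNReal.toReal_ofReal (by positivity)]
  rw [htor]
  have hn2 : (n:ℝ) ^ (-2:ℝ) = (((n:ℝ) ^ 2)⁻¹ : ℝ) := by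
    rw [show (-2:ℝ) = -(2:ℝ) by norm_num, Real.rpow_neg hn0R.le, Real.rpow_two]
  have hς2 : ς ^ (-2:ℝ) = ((ς ^ 2)⁻¹ : ℝ) := by
    rw [show (-2:ℝ) = -(2:ℝ) by norm_num, Real.rpow_neg hς0.le, Real.rpow_two]
  have hu2 : u ^ 2 = 16 / 25 * ((n:ℝ) ^ 5 * ς ^ 2) := by
    rw [hu, mul_pow, mul_pow, mul_pow, Real.sq_sqrt hn0R.le]
    ring
  have hform : ((4 * (n:ℝ) ^ 3) * (K * M ^ (-δ))) / u ^ 2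
      = (25 / 4 * K) * (M ^ (-δ) * ((n:ℝ) ^ 2)⁻¹ * (ς ^ 2)⁻¹) := by
    rw [hu2]
    field_simp
    ring
  rw [hform, hn2, hς2]
  have h25 : 25 / 4 * K ≤ 7 * K + 1 := by linarith
  calc (25 / 4 * K) * (M ^ (-δ) * ((n:ℝ) ^ 2)⁻¹ * (ς ^ 2)⁻¹)
      ≤ (7 * K + 1) * (M ^ (-δ) * ((n:ℝ) ^ 2)⁻¹ * (ς ^ 2)⁻¹) := by
        apply mul_le_mul_of_nonneg_right h25
        have hi1 : (0:ℝ) ≤ ((n:ℝ) ^ 2)⁻¹ := by positivity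
        have hi2 : (0:ℝ) ≤ ((ς:ℝ) ^ 2)⁻¹ := by positivity
        exact mul_nonneg (mul_nonneg hMδ0 hi1) hi2
    _ = (7 * K + 1) * ((n:ℝ) ^ 2)⁻¹ * M ^ (-δ) * (ς ^ 2)⁻¹ := by ring
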